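/- If φ is a theorem of H_S4 (⊢_S4 φ), then v(φ) = 2 for every level valuation v ∈ L'_S4. -/
import Mathlib


/-- Modal formulas over signature Σ = {¬, □, →, ∨, ∧}. -/
inductive MF
  | var : ℕ → MF
  | neg : MF → MF
  | box : MF → MF
  | imp : MF → MF → MF
  | dis : MF → MF → MF
  | con : MF → MF → MF
deriving DecidableEq

/-- The three truth values 0, 1, 2. -/
inductive V3
  | z | o | t
deriving DecidableEq

/-- Designated values D = {1, 2}. -/
def Des : Set V3 := {V3.o, V3.t}

def negOp : V3 → Set V3
  | .z => {.o, .t}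
  | .o => {.z}
  | .t => {.z}

def boxOp : V3 → Set V3
  | .z => {.z}
  | .o => {.z}
  | .t => {.t}

def impOp : V3 → V3 → Set V3
  | .z, .z => {.o, .t}
  | .z, .o => {.o, .t}
  | .z, .t => {.t}
  | .o, .z => {.z}
  | .o, .o => {.o, .t}
  | .o, .t => {.t}
  | .t, .z => {.z}
  | .t, .o => {.o}
  | .t, .t => {.t}

def disOp : V3 → V3 → Set V3
  | .z, .z => {.z}
  | .z, .o => {.o, .t}
  | .o, .z => {.o, .t}
  | .o, .o => {.o, .t}
  | _, _ => {.t}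

def conOp : V3 → V3 → Set V3
  | .z, _ => {.z}
  | _, .z => {.z}
  | .t, .t => {.t}
  | _, _ => {.o}

/-- Valuations over the reduced Nmatrix M'_S4. -/
def IsVal (v : MF → V3) : Prop :=
  (∀ α, v (.neg α) ∈ negOp (v α)) ∧
  (∀ α, v (.box α) ∈ boxOp (v α)) ∧
  (∀ α β, v (.imp α β) ∈ impOp (v α) (v β)) ∧
  (∀ α β, v (.dis α β) ∈ disOp (v α) (v β)) ∧
  (∀ α β, v (.con α β) ∈ conOp (v α) (v β))

/-- The levels L_k. -/
def LevelS4 : ℕ → Set (MF → V3)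
  | 0 => {v | IsVal v}
  | (k+1) => {v ∈ LevelS4 k | ∀ α, (∀ w ∈ LevelS4 k, w α ∈ Des) → v α = V3.t}

/-- Level valuations L'_S4 = ⋂_{k ≥ 0} L_k. -/
def LVS4 : Set (MF → V3) := ⋂ k, LevelS4 k

/-- Theorems of the Hilbert calculus H_S4 : classical propositional axioms over
{¬,→,∨,∧}, plus K, T, 4, with modus ponens and necessitation. -/
inductive S4Thm : MF → Prop
  | ax1 (α β : MF) : S4Thm (α.imp (β.imp α))
  | ax2 (α β γ : MF) : S4Thm ((α.imp (β.imp γ)).imp ((α.imp β).imp (α.imp γ)))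
  | ax3 (α β : MF) : S4Thm (α.imp (β.imp (α.con β)))
  | ax4 (α β : MF) : S4Thm ((α.con β).imp α)
  | ax5 (α β : MF) : S4Thm ((α.con β).imp β)
  | ax6 (α β : MF) : S4Thm (α.imp (α.dis β))
  | ax7 (α β : MF) : S4Thm (β.imp (α.dis β))
  | ax8 (α β γ : MF) : S4Thm ((α.imp γ).imp ((β.imp γ).imp ((α.dis β).imp γ)))
  | ax9 (α β : MF) : S4Thm ((β.imp α).imp ((β.imp α.neg).imp β.neg))
  | ax10 (α β : MF) : S4Thm (α.imp (α.neg.imp β))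
  | dne (α : MF) : S4Thm (α.neg.neg.imp α)
  | axK (α β : MF) : S4Thm ((α.imp β).box.imp (α.box.imp β.box))
  | axT (α : MF) : S4Thm (α.box.imp α)
  | axFour (α : MF) : S4Thm (α.box.imp α.box.box)
  | mp {α β : MF} : S4Thm (α.imp β) → S4Thm α → S4Thm β
  | nec {α : MF} : S4Thm α → S4Thm α.box

/-- Γ ⊢_S4 φ : either φ is a theorem, or some β₁,…,βₙ ∈ Γ (n ≥ 1) give a theorem
β₁ → (β₂ → (… → (βₙ → φ)…)). -/
def S4Deriv (Γ : Set MF) (φ : MF) : Prop :=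
  S4Thm φ ∨ ∃ l : List MF, l ≠ [] ∧ (∀ β ∈ l, β ∈ Γ) ∧ S4Thm (l.foldr MF.imp φ)

/-- Δ is φ-saturated (w.r.t. ⊢_S4). -/
def SatS4 (Δ : Set MF) (φ : MF) : Prop :=
  ¬ S4Deriv Δ φ ∧ ∀ α ∉ Δ, S4Deriv (insert α Δ) φ

open Classical in
/-- The canonical function v_Δ. -/
noncomputable def vDeltaS4 (Δ : Set MF) : MF → V3 :=
  fun α => if MF.box α ∈ Δ then V3.t else if α ∈ Δ then V3.o else V3.z

/-- Λ is closed under (immediate, hence all) subformulas. -/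
def SubClosed (Λ : Set MF) : Prop :=
  (∀ α, MF.neg α ∈ Λ → α ∈ Λ) ∧
  (∀ α, MF.box α ∈ Λ → α ∈ Λ) ∧
  (∀ α β, MF.imp α β ∈ Λ → α ∈ Λ ∧ β ∈ Λ) ∧
  (∀ α β, MF.dis α β ∈ Λ → α ∈ Λ ∧ β ∈ Λ) ∧
  (∀ α β, MF.con α β ∈ Λ → α ∈ Λ ∧ β ∈ Λ)

/-- Partial valuations with domain Λ (modelled as total functions constrained on Λ). -/
def IsPVal (Λ : Set MF) (v : MF → V3) : Prop :=
  (∀ α, MF.neg α ∈ Λ → v (.neg α) ∈ negOp (v α)) ∧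
  (∀ α, MF.box α ∈ Λ → v (.box α) ∈ boxOp (v α)) ∧
  (∀ α β, MF.imp α β ∈ Λ → v (.imp α β) ∈ impOp (v α) (v β)) ∧
  (∀ α β, MF.dis α β ∈ Λ → v (.dis α β) ∈ disOp (v α) (v β)) ∧
  (∀ α β, MF.con α β ∈ Λ → v (.con α β) ∈ conOp (v α) (v β))

/-- PLV'(Λ): partial' level valuations over Λ (witnesses amongst level valuations). -/
def PLV' (Λ : Set MF) : Set (MF → V3) :=
  {v | IsPVal Λ v ∧ ∀ α ∈ Λ, v α = V3.o →
    ∃ w ∈ LVS4, w α = V3.z ∧ ∀ β ∈ Λ, v β = V3.t → w β = V3.t}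

/-- PLV(Λ): partial level valuations over Λ, defined as the largest subset of
PV(Λ) whose condition is witnessed inside itself. -/
def PLV (Λ : Set MF) : Set (MF → V3) :=
  ⋃₀ {S | (∀ v ∈ S, IsPVal Λ v) ∧
      ∀ v ∈ S, ∀ α ∈ Λ, v α = V3.o →
        ∃ w ∈ S, w α = V3.z ∧ ∀ β ∈ Λ, v β = V3.t → w β = V3.t}

/-- Set of subformulas of a modal formula. -/
def MF.subf : MF → Finset MF
  | .var n => {.var n}
  | .neg α => insert (.neg α) α.subf
  | .box α => insert (.box α) α.subf
  | .imp α β => insert (.imp α β) (α.subf ∪ β.subf)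
  | .dis α β => insert (.dis α β) (α.subf ∪ β.subf)
  | .con α β => insert (.con α β) (α.subf ∪ β.subf)


lemma des_iff (x : V3) : x ∈ Des ↔ x ≠ V3.z := by cases x <;> simp [Des]

lemma imp_iff' {x y c : V3} (h : c ∈ impOp x y) :
    (c ≠ V3.z ↔ (x ≠ V3.z → y ≠ V3.z)) := by
  cases x <;> cases y <;> cases c <;> simp_all [impOp]

lemma neg_iff' {x c : V3} (h : c ∈ negOp x) : (c ≠ V3.z ↔ x = V3.z) := by
  cases x <;> cases c <;> simp_all [negOp]

lemma dis_iff' {x y c : V3} (h : c ∈ disOp x y) :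
    (c ≠ V3.z ↔ (x ≠ V3.z ∨ y ≠ V3.z)) := by
  cases x <;> cases y <;> cases c <;> simp_all [disOp]

lemma con_iff' {x y c : V3} (h : c ∈ conOp x y) :
    (c ≠ V3.z ↔ (x ≠ V3.z ∧ y ≠ V3.z)) := by
  cases x <;> cases y <;> cases c <;> simp_all [conOp]

lemma box_iff' {x c : V3} (h : c ∈ boxOp x) : (c ≠ V3.z ↔ x = V3.t) := by
  cases x <;> cases c <;> simp_all [boxOp]

lemma imp_t' {x y c : V3} (h : c ∈ impOp x y) (hc : c = V3.t) (hx : x = V3.t) :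
    y = V3.t := by
  cases x <;> cases y <;> cases c <;> simp_all [impOp]

lemma box_t' {c : V3} (h : c ∈ boxOp V3.t) : c = V3.t := by
  cases c <;> simp_all [boxOp]

lemma isval_of_level {k : ℕ} {v : MF → V3} (hv : v ∈ LevelS4 k) : IsVal v := by
  induction k with
  | zero => exact hv
  | succ k ih => exact ih hv.1

lemma level_force {k : ℕ} {v : MF → V3} (hv : v ∈ LevelS4 (k+1)) (φ : MF)
    (hd : ∀ w : MF → V3, IsVal w → w φ ≠ V3.z) : v φ = V3.t :=
  hv.2 φ (fun w hw => (des_iff _).2 (hd w (isval_of_level hw)))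

lemma s4_key (φ : MF) (h : S4Thm φ) :
    ∀ k : ℕ, ∀ v ∈ LevelS4 (k+1), v φ = V3.t := by
  induction h with
  | @mp α β hab ha ihab iha =>
    intro k v hv
    exact imp_t' ((isval_of_level hv).2.2.1 α β) (ihab k v hv) (iha k v hv)
  | @nec α hα ih =>
    intro k v hv
    have h1 := ih k v hv
    have hm := (isval_of_level hv).2.1 α
    rw [h1] at hm
    exact box_t' hm
  | axK α β =>
    intro k v hv
    refine level_force hv _ (fun w hw => ?_)
    rw [imp_iff' (hw.2.2.1 _ _), box_iff' (hw.2.1 _), imp_iff' (hw.2.2.1 _ _),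
      box_iff' (hw.2.1 _), box_iff' (hw.2.1 _)]
    intro h1 h2
    exact imp_t' (hw.2.2.1 α β) h1 h2
  | axT α =>
    intro k v hv
    refine level_force hv _ (fun w hw => ?_)
    rw [imp_iff' (hw.2.2.1 _ _), box_iff' (hw.2.1 _)]
    intro h1
    rw [h1]
    simp
  | axFour α =>
    intro k v hv
    refine level_force hv _ (fun w hw => ?_)
    rw [imp_iff' (hw.2.2.1 _ _), box_iff' (hw.2.1 _), box_iff' (hw.2.1 _)]
    intro h1
    have hm := hw.2.1 α
    rw [h1] at hm
    exact box_t' hm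
  | dne α =>
    intro k v hv
    refine level_force hv _ (fun w hw => ?_)
    rw [imp_iff' (hw.2.2.1 _ _), neg_iff' (hw.1 _)]
    intro h1 h2
    exact (neg_iff' (hw.1 α)).mpr h2 h1
  | _ =>
    intro k v hv
    refine level_force hv _ (fun w hw => ?_)
    have I := fun a b => imp_iff' (hw.2.2.1 a b)
    have N := fun a => neg_iff' (hw.1 a)
    have D := fun a b => dis_iff' (hw.2.2.2.1 a b)
    have C := fun a b => con_iff' (hw.2.2.2.2 a b)
    simp only [I, N, D, C]
    tauto

/-- theorems of H_S4 receive the value 2 under every level valuation. -/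
theorem s4_theorem_value_two (φ : MF) (h : S4Thm φ) :
    ∀ v ∈ LVS4, v φ = V3.t := by
  intro v hv
  exact s4_key φ h 0 v (Set.mem_iInter.mp hv 1)
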